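/- Let φ : L → L' be a surjective homomorphism of co-Heyting algebras (preserving ⊥, ⊤, ⊔, ⊓ and \) and d a natural number. If the ideal dL is principal, generated by e ∈ L (i.e. dL = { x ∈ L | x ≤ e }), then dL' is principal, generated by φ(e) (i.e. dL' = { y ∈ L' | y ≤ φ(e) }). -/

import Mathlib

/-!
Say that a prime filter `p` has height `≥ n` if there is a chain of `n` strict inclusions of prime
filters below it; then `codim a ≥ n` says that every prime filter containing `a` has height `≥ n`.

Along a surjective co-Heyting morphism `φ`, `φ⁻¹ p` has the same height as `p`: a chain below
`φ⁻¹ p` is pushed forward by taking upper closures of images, and `φ⁻¹` of such an upper closure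
gives back the original filter, because `φ z ≤ φ x` means `φ (z \ x) = ⊥`.

A prime filter of height `≥ n` contains an element of codimension `≥ n`: if `a ∈ q ⊊ p` has
codimension `≥ n` and `s ∈ p \ q`, then `(a \ s) ⊓ s ∈ p` has codimension `≥ n + 1`, because `s` is
strongly below `a \ s`. So if `dL = ↓e`, the prime filters of `L` of height `≥ d` are exactly those
containing `e`, hence those of `L'` are exactly those containing `φ e`, and prime filters separate
the points of a distributive lattice.
-/

/-- A prime filter of a bounded lattice: upward closed, closed under `⊓`,
contains `⊤`, does not contain `⊥`, and prime with respect to `⊔`. -/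
def IsPrimeFilter {L : Type*} [Lattice L] [BoundedOrder L] (p : Set L) : Prop :=
  (∀ x ∈ p, ∀ y : L, x ≤ y → y ∈ p) ∧
  (∀ x ∈ p, ∀ y ∈ p, x ⊓ y ∈ p) ∧
  (⊤ : L) ∈ p ∧ (⊥ : L) ∉ p ∧
  ∀ x y : L, x ⊔ y ∈ p → x ∈ p ∨ y ∈ p

/-- `dim a ≥ n`: there is a strictly increasing chain `p 0 ⊊ p 1 ⊊ ⋯ ⊊ p n`
of prime filters with `a ∈ p 0`. -/
def DimGE {L : Type*} [Lattice L] [BoundedOrder L] (a : L) (n : ℕ) : Prop :=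
  ∃ p : Fin (n + 1) → Set L, (∀ i, IsPrimeFilter (p i)) ∧
    (∀ i j : Fin (n + 1), i < j → p i ⊂ p j) ∧ a ∈ p 0

/-- `codim a ≥ n`: every prime filter `p` containing `a` admits a strictly
increasing chain `q n ⊊ ⋯ ⊊ q 1 ⊊ q 0 = p` of prime filters. -/
def CodimGE {L : Type*} [Lattice L] [BoundedOrder L] (a : L) (n : ℕ) : Prop :=
  ∀ p : Set L, IsPrimeFilter p → a ∈ p →
    ∃ q : Fin (n + 1) → Set L, (∀ i, IsPrimeFilter (q i)) ∧
      (∀ i j : Fin (n + 1), i < j → q j ⊂ q i) ∧ q 0 = p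

/-- The strong order: `b ≪ a` iff for every `c`, `a ≤ b ⊔ c` implies `a ≤ c`. -/
def StrongBelow {L : Type*} [Lattice L] (b a : L) : Prop :=
  ∀ c : L, a ≤ b ⊔ c → a ≤ c

open Order Function

theorem Function.Surjective.preimage_ssubset_preimage_iff {α β : Type*} {f : α → β}
    (hf : Surjective f) {s t : Set β} : f ⁻¹' s ⊂ f ⁻¹' t ↔ s ⊂ t := by
  simp only [ssubset_iff_subset_not_subset, hf.preimage_subset_preimage_iff]

section PrimeFilters

variable {L L' F : Type*}

namespace IsPrimeFilter

section Lattice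

variable [Lattice L] [BoundedOrder L] {p : Set L} {x y : L}

theorem mem_of_le (hp : IsPrimeFilter p) (hx : x ∈ p) (hxy : x ≤ y) : y ∈ p :=
  hp.1 x hx y hxy

theorem inf_mem (hp : IsPrimeFilter p) (hx : x ∈ p) (hy : y ∈ p) : x ⊓ y ∈ p :=
  hp.2.1 x hx y hy

theorem top_mem (hp : IsPrimeFilter p) : ⊤ ∈ p :=
  hp.2.2.1

theorem bot_notMem (hp : IsPrimeFilter p) : ⊥ ∉ p :=
  hp.2.2.2.1

theorem mem_or_mem (hp : IsPrimeFilter p) (h : x ⊔ y ∈ p) : x ∈ p ∨ y ∈ p :=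
  hp.2.2.2.2 x y h

theorem preimage [Lattice L'] [BoundedOrder L'] [FunLike F L' L] [BoundedLatticeHomClass F L' L]
    (hp : IsPrimeFilter p) (φ : F) : IsPrimeFilter (φ ⁻¹' p) :=
  ⟨fun _ ha _ hab => hp.mem_of_le ha (OrderHomClass.mono φ hab),
    fun a ha b hb => by simpa only [Set.mem_preimage, map_inf] using hp.inf_mem ha hb,
    by simpa only [Set.mem_preimage, map_top] using hp.top_mem,
    by simpa only [Set.mem_preimage, map_bot] using hp.bot_notMem,
    fun a b h => hp.mem_or_mem (by simpa only [Set.mem_preimage, map_sup] using h)⟩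

end Lattice

end IsPrimeFilter

theorem Order.Ideal.IsPrime.isPrimeFilter_compl [Lattice L] [BoundedOrder L] {J : Ideal L}
    (hJ : J.IsPrime) : IsPrimeFilter (J : Set L)ᶜ :=
  ⟨fun _ hx _ hxy hy => hx (J.lower hxy hy),
    fun _ hx _ hy hxy => (hJ.mem_or_mem hxy).elim hx hy,
    hJ.top_notMem, fun h => h J.bot_mem,
    fun _ _ hab => not_and_or.1 fun h => hab (J.sup_mem h.1 h.2)⟩

section DistribLattice

variable [DistribLattice L] [BoundedOrder L]

theorem exists_isPrimeFilter_disjoint {I : Ideal L} {b : L} (hb : b ∉ I) :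
    ∃ p, IsPrimeFilter p ∧ b ∈ p ∧ Disjoint p I := by
  have hbI : Disjoint (PFilter.principal b : Set L) I :=
    Set.disjoint_left.2 fun _ hx hxI => hb (I.lower (PFilter.mem_principal.1 hx) hxI)
  obtain ⟨J, hJ, hIJ, hbJ⟩ := DistribLattice.prime_ideal_of_disjoint_filter_ideal hbI
  exact ⟨_, hJ.isPrimeFilter_compl, Set.disjoint_left.1 hbJ (PFilter.mem_principal.2 le_rfl),
    Set.disjoint_compl_left_iff_subset.2 hIJ⟩

theorem le_iff_forall_isPrimeFilter {a b : L} :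
    a ≤ b ↔ ∀ p, IsPrimeFilter p → a ∈ p → b ∈ p := by
  refine ⟨fun hab p hp ha => hp.mem_of_le ha hab, fun h => ?_⟩
  by_contra hab
  obtain ⟨p, hp, hap, hpb⟩ :=
    exists_isPrimeFilter_disjoint (I := Ideal.principal b) (Ideal.mem_principal.not.2 hab)
  exact Set.disjoint_left.1 hpb (h p hp hap) (Ideal.mem_principal.2 le_rfl)

theorem IsPrimeFilter.exists_ssubset_of_strongBelow {q : Set L} (hq : IsPrimeFilter q)
    {b s : L} (hb : b ∈ q) (hs : s ∈ q) (hsb : StrongBelow s b) :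
    ∃ p, IsPrimeFilter p ∧ p ⊂ q ∧ b ∈ p := by
  -- the ideal generated by `qᶜ ∪ {s}`
  have hI : IsIdeal {z : L | ∃ t ∉ q, z ≤ t ⊔ s} :=
    { IsLowerSet := fun _ _ hxy ⟨t, ht, hle⟩ => ⟨t, ht, hxy.trans hle⟩
      Nonempty := ⟨⊥, ⊥, hq.bot_notMem, bot_le⟩
      Directed := by
        rintro x ⟨t₁, ht₁, h₁⟩ y ⟨t₂, ht₂, h₂⟩
        refine ⟨x ⊔ y, ⟨t₁ ⊔ t₂, fun h => (hq.mem_or_mem h).elim ht₁ ht₂, ?_⟩,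
          le_sup_left, le_sup_right⟩
        rw [sup_sup_distrib_right]
        exact sup_le_sup h₁ h₂ }
  have hbI : b ∉ hI.toIdeal := fun ⟨t, ht, hle⟩ =>
    ht (hq.mem_of_le hb (hsb t (by rwa [sup_comm])))
  obtain ⟨p, hp, hbp, hpI⟩ := exists_isPrimeFilter_disjoint hbI
  have hpq : p ⊆ q := fun z hz => by_contra fun hzq =>
    Set.disjoint_left.1 hpI hz ⟨z, hzq, le_sup_left⟩
  have hsp : s ∉ p := Set.disjoint_right.1 hpI ⟨⊥, hq.bot_notMem, le_sup_right⟩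
  exact ⟨p, hp, hpq.ssubset_of_not_superset fun h => hsp (h hs), hbp⟩

end DistribLattice

theorem strongBelow_sdiff [GeneralizedCoheytingAlgebra L] (a s : L) : StrongBelow s (a \ s) :=
  fun c h => by
    rw [sdiff_le_iff, ← sup_assoc, sup_idem] at h
    exact sdiff_le_iff.2 h

def HeightGE [Lattice L] [BoundedOrder L] (p : Set L) : ℕ → Prop
  | 0 => True
  | n + 1 => ∃ q, IsPrimeFilter q ∧ q ⊂ p ∧ HeightGE q n

section Height

variable [Lattice L] [BoundedOrder L]

theorem heightGE_iff_exists_chain {p : Set L} (hp : IsPrimeFilter p) {n : ℕ} :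
    HeightGE p n ↔
      ∃ q : Fin (n + 1) → Set L, (∀ i, IsPrimeFilter (q i)) ∧ StrictAnti q ∧ q 0 = p := by
  induction n generalizing p with
  | zero =>
    exact ⟨fun _ => ⟨fun _ => p, fun _ => hp, Fin.strictAnti_iff_succ_lt.2 finZeroElim, rfl⟩,
      fun _ => ⟨⟩⟩
  | succ n ih =>
    constructor
    · rintro ⟨q, hq, hqp, hqn⟩
      obtain ⟨r, hr, hr_anti, rfl⟩ := (ih hq).1 hqn
      refine ⟨Fin.cons p r, Fin.cases hp hr,
        Fin.strictAnti_iff_succ_lt.2 (Fin.cases hqp fun i => ?_), rfl⟩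
      simpa [← Fin.succ_castSucc] using hr_anti (Fin.castSucc_lt_succ (i := i))
    · rintro ⟨q, hq, hq_anti, rfl⟩
      refine ⟨q 1, hq 1, hq_anti Fin.zero_lt_one, (ih (hq 1)).2 ?_⟩
      exact ⟨Fin.tail q, fun i => hq i.succ, hq_anti.comp_strictMono Fin.strictMono_succ, rfl⟩

theorem codimGE_iff_forall_heightGE {a : L} {n : ℕ} :
    CodimGE a n ↔ ∀ p, IsPrimeFilter p → a ∈ p → HeightGE p n :=
  forall₂_congr fun _ hp => imp_congr_right fun _ => (heightGE_iff_exists_chain hp).symm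

theorem CodimGE.of_le {a b : L} {n : ℕ} (hb : CodimGE b n) (hab : a ≤ b) : CodimGE a n :=
  fun p hp ha => hb p hp (hp.mem_of_le ha hab)

end Height

theorem codimGE_inf_of_strongBelow [DistribLattice L] [BoundedOrder L] {b s : L} {n : ℕ}
    (hsb : StrongBelow s b) (hb : CodimGE b n) : CodimGE (b ⊓ s) (n + 1) := by
  rw [codimGE_iff_forall_heightGE] at hb ⊢
  intro p hp hbs
  obtain ⟨q, hq, hqp, hbq⟩ := hp.exists_ssubset_of_strongBelow
    (hp.mem_of_le hbs inf_le_left) (hp.mem_of_le hbs inf_le_right) hsb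
  exact ⟨q, hq, hqp, hb q hq hbq⟩

section CoheytingAlgebra

variable [CoheytingAlgebra L]

theorem IsPrimeFilter.exists_codimGE_mem_of_heightGE {p : Set L} (hp : IsPrimeFilter p) {n : ℕ}
    (h : HeightGE p n) : ∃ a ∈ p, CodimGE a n := by
  induction n generalizing p with
  | zero => exact ⟨⊤, hp.top_mem, codimGE_iff_forall_heightGE.2 fun _ _ _ => ⟨⟩⟩
  | succ n ih =>
    obtain ⟨q, hq, hqp, hqn⟩ := h
    obtain ⟨a, haq, ha⟩ := ih hq hqn
    obtain ⟨s, hsp, hsq⟩ := Set.exists_of_ssubset hqp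
    have has : a \ s ∈ q := (hq.mem_or_mem (hq.mem_of_le haq le_sup_sdiff)).resolve_left hsq
    exact ⟨a \ s ⊓ s, hp.inf_mem (hqp.subset has) hsp,
      codimGE_inf_of_strongBelow (strongBelow_sdiff a s) (ha.of_le sdiff_le)⟩

theorem heightGE_iff_mem_of_codimGE_eq {d : ℕ} {e : L} (he : {x : L | CodimGE x d} = {x | x ≤ e})
    {p : Set L} (hp : IsPrimeFilter p) : HeightGE p d ↔ e ∈ p := by
  have he' (x : L) : CodimGE x d ↔ x ≤ e := Set.ext_iff.1 he x
  refine ⟨fun h => ?_, codimGE_iff_forall_heightGE.1 ((he' e).2 le_rfl) p hp⟩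
  obtain ⟨a, hap, ha⟩ := hp.exists_codimGE_mem_of_heightGE h
  exact hp.mem_of_le hap ((he' a).1 ha)

variable [CoheytingAlgebra L'] [FunLike F L L'] [CoheytingHomClass F L L'] (φ : F)

theorem preimage_upperClosure_image {q : Set L} (hq : IsPrimeFilter q)
    (hker : ∀ x ∈ q, φ x ≠ ⊥) : φ ⁻¹' (upperClosure (φ '' q) : Set L') = q := by
  refine Set.Subset.antisymm (fun x hx => ?_) fun x hx =>
    mem_upperClosure.2 ⟨φ x, ⟨x, hx, rfl⟩, le_rfl⟩
  obtain ⟨_, ⟨z, hz, rfl⟩, hzx⟩ := mem_upperClosure.1 hx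
  refine (hq.mem_or_mem (hq.mem_of_le hz (le_sup_sdiff (a := x)))).resolve_right fun hzx' => ?_
  exact hker _ hzx' (by rwa [map_sdiff, sdiff_eq_bot_iff])

theorem IsPrimeFilter.upperClosure_image {q : Set L} (hq : IsPrimeFilter q) (hφ : Surjective φ)
    (hker : ∀ x ∈ q, φ x ≠ ⊥) : IsPrimeFilter (upperClosure (φ '' q) : Set L') := by
  have hmem (y : L') : y ∈ (upperClosure (φ '' q) : Set L') ↔ ∃ x ∈ q, φ x ≤ y := by
    simp only [SetLike.mem_coe, mem_upperClosure, Set.exists_mem_image]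
  refine ⟨fun y hy y' hyy' => (upperClosure _).upper hyy' hy, fun y₁ h₁ y₂ h₂ => ?_,
    (hmem ⊤).2 ⟨⊤, hq.top_mem, le_top⟩, fun h => ?_, fun y₁ y₂ h => ?_⟩
  · obtain ⟨x₁, hx₁, hle₁⟩ := (hmem y₁).1 h₁
    obtain ⟨x₂, hx₂, hle₂⟩ := (hmem y₂).1 h₂
    exact (hmem _).2 ⟨x₁ ⊓ x₂, hq.inf_mem hx₁ hx₂,
      (map_inf φ x₁ x₂).trans_le (inf_le_inf hle₁ hle₂)⟩
  · obtain ⟨x, hx, hle⟩ := (hmem ⊥).1 h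
    exact hker x hx (le_bot_iff.1 hle)
  · obtain ⟨x, hx, hle⟩ := (hmem _).1 h
    obtain ⟨z, rfl⟩ := hφ y₁
    refine (hq.mem_or_mem (hq.mem_of_le hx (le_sup_sdiff (a := z)))).imp
      (fun hz => (hmem _).2 ⟨z, hz, le_rfl⟩) fun hxz => (hmem _).2 ⟨x \ z, hxz, ?_⟩
    rw [map_sdiff]
    exact sdiff_le_iff.2 hle

theorem heightGE_preimage_iff {φ : F} (hφ : Surjective φ) {p : Set L'} (hp : IsPrimeFilter p)
    {n : ℕ} : HeightGE (φ ⁻¹' p) n ↔ HeightGE p n := by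
  induction n generalizing p with
  | zero => exact Iff.rfl
  | succ n ih =>
    constructor
    · rintro ⟨q, hq, hqp, hqn⟩
      have hker (x : L) (hx : x ∈ q) : φ x ≠ ⊥ := fun h => hp.bot_notMem (h ▸ hqp.subset hx)
      have hq' := hq.upperClosure_image φ hφ hker
      have hpre := preimage_upperClosure_image φ hq hker
      refine ⟨_, hq', ?_, (ih hq').1 (by rwa [hpre])⟩
      rwa [← hφ.preimage_ssubset_preimage_iff, hpre]
    · rintro ⟨q, hq, hqp, hqn⟩
      exact ⟨φ ⁻¹' q, hq.preimage φ, hφ.preimage_ssubset_preimage_iff.2 hqp, (ih hq).2 hqn⟩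

end CoheytingAlgebra

end PrimeFilters

theorem stmt8 {L L' : Type*} [CoheytingAlgebra L] [CoheytingAlgebra L']
    (φ : CoheytingHom L L') (hφ : Function.Surjective φ) (d : ℕ)
    (e : L) (he : {x : L | CodimGE x d} = {x : L | x ≤ e}) :
    {y : L' | CodimGE y d} = {y : L' | y ≤ φ e} := by
  ext y
  rw [Set.mem_ofPred_eq, Set.mem_ofPred_eq, codimGE_iff_forall_heightGE,
    le_iff_forall_isPrimeFilter]
  refine forall₂_congr fun p hp => imp_congr_right fun _ => ?_
  rw [← heightGE_preimage_iff hφ hp, heightGE_iff_mem_of_codimGE_eq he (hp.preimage φ),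
    Set.mem_preimage]
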